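/- Let A be a finite-dimensional algebra over a field and let I be a two-sided ideal of A. Suppose that the category of finitely generated A-modules has only finitely many indecomposable modules up to isomorphism, and that the category of finitely generated A/I-modules has the same (finite) number of indecomposable modules up to isomorphism. Then I = 0. -/

import Mathlib

open CategoryTheory

noncomputable section

/-- A module is indecomposable if it is nonzero and is not the internal direct sum of
two nonzero submodules. -/
def IsIndecModule (R : Type) [Ring R] (M : Type) [AddCommGroup M] [Module R M] : Prop :=
  Nontrivial M ∧ ∀ N₁ N₂ : Submodule R M, IsCompl N₁ N₂ → N₁ = ⊥ ∨ N₂ = ⊥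

/-- The category of finitely generated indecomposable `R`-modules. -/
abbrev FGIndecModules (R : Type) [Ring R] : Type 1 :=
  CategoryTheory.ObjectProperty.FullSubcategory
    (fun M : ModuleCat.{0} R => Module.Finite R M ∧ IsIndecModule R M)

/-- The type of isomorphism classes of finitely generated indecomposable
`R`-modules. -/
abbrev IndecIsoClasses (R : Type) [Ring R] : Type 1 :=
  Quotient (CategoryTheory.isIsomorphicSetoid (FGIndecModules R))

/-!
Restriction of scalars along the surjection `A → A/I` is fully faithful and identifies the
submodule lattices, so it embeds the finitely generated indecomposable `A/I`-modules into the
`A`-modules, injectively on isomorphism classes. Equal finite counts make this embedding onto, so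
every finitely generated indecomposable `A`-module is killed by `I`. As `A` is artinian, the module
`A` is built from indecomposable submodules by finitely many direct sums, hence is killed by `I`,
and `i = i • 1 = 0` for `i ∈ I`.
-/

theorem IsIndecModule.of_submoduleOrderIso {R S M N : Type} [Ring R] [Ring S] [AddCommGroup M]
    [Module R M] [AddCommGroup N] [Module S N] (e : Submodule R M ≃o Submodule S N)
    (h : IsIndecModule R M) : IsIndecModule S N := by
  refine ⟨?_, fun N₁ N₂ hc => ?_⟩
  · have := (Submodule.nontrivial_iff R).2 h.1
    exact (Submodule.nontrivial_iff S).1 (e.toEquiv.nontrivial_congr.1 this)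
  · simpa using h.2 (e.symm N₁) (e.symm N₂) (e.symm.isCompl_iff.1 hc)

theorem IsArtinian.induction_on_isIndecModule {R M : Type} [Ring R] [AddCommGroup M]
    [Module R M] [IsArtinian R M] {P : Submodule R M → Prop} (bot : P ⊥)
    (indec : ∀ N : Submodule R M, IsIndecModule R N → P N)
    (sup : ∀ N₁ N₂, P N₁ → P N₂ → P (N₁ ⊔ N₂)) (N : Submodule R M) : P N := by
  induction N using WellFoundedLT.induction with
  | _ N ih =>
  rcases subsingleton_or_nontrivial N with hN | hN
  · rwa [Submodule.subsingleton_iff_eq_bot.1 hN]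
  by_cases hindec : IsIndecModule R N
  · exact indec N hindec
  obtain ⟨N₁, N₂, hc, h₁, h₂⟩ : ∃ N₁ N₂ : Submodule R N, IsCompl N₁ N₂ ∧ N₁ ≠ ⊥ ∧ N₂ ≠ ⊥ := by
    simpa [IsIndecModule, hN] using hindec
  have map_lt {Q Q' : Submodule R N} (hc : IsCompl Q Q') (hQ' : Q' ≠ ⊥) :
      Q.map N.subtype < N := by
    conv_rhs => rw [← N.map_subtype_top]
    refine Submodule.map_strictMono_of_injective N.injective_subtype (lt_top_iff_ne_top.2 ?_)
    rintro rfl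
    exact hQ' (eq_bot_of_isCompl_top hc.symm)
  rw [← N.map_subtype_top, ← hc.sup_eq_top, Submodule.map_sup]
  exact sup _ _ (ih _ (map_lt hc h₂)) (ih _ (map_lt hc.symm h₁))

theorem le_annihilator_of_forall_isIndecModule {R M : Type} [Ring R] [AddCommGroup M]
    [Module R M] [IsArtinian R M] (J : Ideal R)
    (h : ∀ N : Submodule R M, IsIndecModule R N → J ≤ N.annihilator) :
    J ≤ Module.annihilator R M := by
  rw [← Submodule.annihilator_top]
  refine IsArtinian.induction_on_isIndecModule ?_ h (fun N₁ N₂ h₁ h₂ => ?_) ⊤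
  · rw [Submodule.annihilator_bot]
    exact le_top
  · rw [Submodule.annihilator_sup]
    exact le_inf h₁ h₂

namespace CategoryTheory.Functor

variable {C D : Type*} [Category C] [Category D] (F : C ⥤ D)

def mapIsoClasses :
    _root_.Quotient (isIsomorphicSetoid C) → _root_.Quotient (isIsomorphicSetoid D) :=
  Quotient.map F.obj fun _ _ ⟨e⟩ => ⟨F.mapIso e⟩

theorem mapIsoClasses_injective [F.Full] [F.Faithful] : Function.Injective F.mapIsoClasses := by
  rintro ⟨X⟩ ⟨Y⟩ h
  obtain ⟨e⟩ := _root_.Quotient.exact h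
  exact _root_.Quotient.sound ⟨F.preimageIso e⟩

end CategoryTheory.Functor

namespace ModuleCat

variable {R S : Type} [Ring R] [Ring S] {f : R →+* S}

theorem restrictScalars_full_of_surjective (hf : Function.Surjective f) :
    (restrictScalars.{0} f).Full where
  map_surjective {M N} g := ⟨ofHom
    { toFun := g
      map_add' := g.hom.map_add
      map_smul' := fun s x => by
        obtain ⟨r, rfl⟩ := hf s
        exact g.hom.map_smul r x }, rfl⟩

def submoduleOrderIsoRestrictScalars (hf : Function.Surjective f) (M : ModuleCat.{0} S) :
    Submodule S M ≃o Submodule R ((restrictScalars f).obj M) where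
  toFun N := { N.toAddSubmonoid with smul_mem' := fun r _ hx => N.smul_mem (f r) hx }
  invFun N :=
    { N.toAddSubmonoid with
      smul_mem' := fun s x hx => by
        obtain ⟨r, rfl⟩ := hf s
        exact N.smul_mem r hx }
  left_inv _ := rfl
  right_inv _ := rfl
  map_rel_iff' := Iff.rfl

theorem finite_restrictScalars_of_surjective (hf : Function.Surjective f) (M : ModuleCat.{0} S)
    [Module.Finite S M] : Module.Finite R ((restrictScalars f).obj M) := by
  obtain ⟨s, hs⟩ := Module.Finite.fg_top (R := S) (M := M)
  let e := submoduleOrderIsoRestrictScalars hf M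
  refine ⟨s, (map_eq_top_iff e.symm).1 (top_le_iff.1 ?_)⟩
  rw [← hs, Submodule.span_le]
  exact Submodule.subset_span (R := R) (M := (restrictScalars f).obj M)

variable (f) in
theorem ker_le_annihilator_restrictScalars (M : ModuleCat.{0} S) :
    RingHom.ker f ≤ Module.annihilator R ((restrictScalars f).obj M) :=
  fun r hr => Module.mem_annihilator.2 fun x =>
    show f r • (x : M) = 0 by rw [RingHom.mem_ker.1 hr, zero_smul]

end ModuleCat

namespace FGIndecModules

variable {R S : Type} [Ring R] [Ring S] {f : R →+* S}

def restrictScalars (hf : Function.Surjective f) : FGIndecModules S ⥤ FGIndecModules R :=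
  ObjectProperty.lift _ (ObjectProperty.ι _ ⋙ ModuleCat.restrictScalars f) fun M =>
    have := M.property.1
    ⟨ModuleCat.finite_restrictScalars_of_surjective hf M.obj,
      M.property.2.of_submoduleOrderIso (ModuleCat.submoduleOrderIsoRestrictScalars hf M.obj)⟩

theorem restrictScalars_mapIsoClasses_injective (hf : Function.Surjective f) :
    Function.Injective (restrictScalars hf).mapIsoClasses := by
  have := ModuleCat.restrictScalars_full_of_surjective hf
  exact Functor.mapIsoClasses_injective (ObjectProperty.lift _ _ _)

theorem ker_le_annihilator_of_surjective_mapIsoClasses (hf : Function.Surjective f)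
    (hsurj : Function.Surjective (restrictScalars hf).mapIsoClasses) (M : FGIndecModules R) :
    RingHom.ker f ≤ Module.annihilator R M.obj := by
  obtain ⟨⟨N⟩, hN⟩ := hsurj ⟦M⟧
  obtain ⟨e⟩ := Quotient.exact hN
  exact (ModuleCat.ker_le_annihilator_restrictScalars f N.obj).trans_eq
    ((ObjectProperty.ι _).mapIso e).toLinearEquiv.annihilator_eq

end FGIndecModules

theorem RingHom.injective_of_surjective_mapIsoClasses {R S : Type} [Ring R] [Ring S]
    [IsArtinianRing R] [IsNoetherianRing R] {f : R →+* S} (hf : Function.Surjective f)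
    (hsurj : Function.Surjective (FGIndecModules.restrictScalars hf).mapIsoClasses) :
    Function.Injective f := by
  have hker : RingHom.ker f ≤ Module.annihilator R R :=
    le_annihilator_of_forall_isIndecModule _ fun N hN =>
      FGIndecModules.ker_le_annihilator_of_surjective_mapIsoClasses hf hsurj
        ⟨ModuleCat.of R N, Module.Finite.iff_fg.2 (IsNoetherian.noetherian N), hN⟩
  refine (injective_iff_map_eq_zero f).2 fun r hr => ?_
  simpa using Module.mem_annihilator.1 (hker hr) 1

/-- Lemma: an ideal with as many indecomposables over the quotient as
over the algebra is zero.  Let `A` be a finite-dimensional algebra over a field `K`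
and `I` a two-sided ideal of `A`.  Suppose the category of finitely generated
`A`-modules has only finitely many indecomposable modules up to isomorphism, and that
the category of finitely generated `A/I`-modules has the same finite number of
indecomposable modules up to isomorphism.  Then `I = 0`. -/
theorem ideal_eq_zero_of_same_number_of_indecomposables
    (K A : Type) [Field K] [Ring A] [Algebra K A] [FiniteDimensional K A]
    (I : TwoSidedIdeal A)
    (hfin : Finite (IndecIsoClasses A))
    (heq : Nat.card (IndecIsoClasses A) = Nat.card (IndecIsoClasses I.ringCon.Quotient)) :
    I = ⊥ := by
  have hf := I.ringCon.mk'_surjective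
  have : IsArtinianRing A := isArtinian_of_tower K inferInstance
  have : IsNoetherianRing A := isNoetherian_of_tower K inferInstance
  rw [← TwoSidedIdeal.ker_ringCon_mk' I, TwoSidedIdeal.ker_eq_bot]
  refine RingHom.injective_of_surjective_mapIsoClasses hf ?_
  exact ((Nat.bijective_iff_injective_and_card _).2
    ⟨FGIndecModules.restrictScalars_mapIsoClasses_injective hf, heq.symm⟩).2

end
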